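/- For odd b ≥ 3 and a coprime to b, (-1)^{inv(a,b)} equals the Jacobi symbol (a/b). (Zolotarev's theorem: the sign of the permutation x ↦ a·x mod b equals the Jacobi symbol.) -/

import Mathlib

/-- The sawtooth function ((x)): 0 if x is an integer, else x - ⌊x⌋ - 1/2. -/
def sawtooth (x : ℚ) : ℚ := if x.den = 1 then 0 else x - ⌊x⌋ - 1/2

/-- The Dedekind sum s(a,b) = ∑_{i=1}^{b-1} (i/b)·((a·i/b)). -/
def dedekindSum (a b : ℕ) : ℚ :=
  ∑ i ∈ Finset.Icc 1 (b - 1), (i : ℚ) / (b : ℚ) * sawtooth ((a * i : ℕ) / (b : ℚ))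

/-- Representative of a·x mod b in {1, ..., b}. -/
def modRep (a b x : ℕ) : ℕ := if a * x % b = 0 then b else a * x % b

/-- inv(a,b): number of pairs 1 ≤ i < j ≤ b with a·i mod b > a·j mod b
(representatives in {1,...,b}). -/
def invNum (a b : ℕ) : ℕ :=
  ((Finset.Icc 1 b ×ˢ Finset.Icc 1 b).filter
    (fun p => p.1 < p.2 ∧ modRep a b p.2 < modRep a b p.1)).card

/-!
Both sides are multiplicative in `b`. For the sign, write `ZMod (m * n) ≃ ZMod m × ZMod n`
via `(i, j) ↦ i + m j`: multiplication by `a` becomes `(i, j) ↦ (a i, a j + ⌊a i / m⌋)`, that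
is, multiplication by `a` on `ZMod m` (repeated `n` times) composed with fibrewise affine maps
of `ZMod n`, and translations of a group of odd order are even permutations. For a prime `p`,
comparing the Vandermonde determinant of the elements of `𝔽_p` with that of their multiples by
`a` gives `sign = a ^ (p choose 2) = a ^ ((p - 1) / 2)` in `𝔽_p`, which is Euler's criterion.
-/

open Equiv Equiv.Perm Finset

theorem Equiv.Perm.sign_eq_neg_one_pow_card_inversions {n : ℕ} (σ : Perm (Fin n)) :
    sign σ = (-1) ^ #{p : Fin n × Fin n | p.1 < p.2 ∧ σ p.2 < σ p.1} := by
  rw [sign_eq_prod_prod_Ioi, ← prod_const, prod_filter, ← univ_product_univ, prod_product]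
  refine prod_congr rfl fun i _ => ?_
  rw [← filter_lt_eq_Ioi, prod_filter]
  refine prod_congr rfl fun j _ => ?_
  by_cases hij : i < j
  · have hne : σ i ≠ σ j := σ.injective.ne hij.ne
    rcases hne.lt_or_gt with h | h <;> simp [hij, h, h.not_gt]
  · simp [hij]

theorem Int.units_pow_eq_self_of_odd (u : ℤˣ) {k : ℕ} (hk : Odd k) : u ^ k = u := by
  rw [Int.units_pow_eq_pow_mod_two, Nat.odd_iff.mp hk, pow_one]

theorem Equiv.Perm.sign_eq_one_of_pow_eq_one {α : Type*} [Fintype α] [DecidableEq α]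
    {σ : Perm α} {k : ℕ} (hk : Odd k) (h : σ ^ k = 1) : sign σ = 1 := by
  simpa [Int.units_pow_eq_self_of_odd _ hk] using congrArg sign h

theorem Equiv.Perm.sign_addRight_of_odd_card {G : Type*} [AddGroup G] [Fintype G]
    [DecidableEq G] (hG : Odd (Fintype.card G)) (c : G) : sign (Equiv.addRight c) = 1 :=
  sign_eq_one_of_pow_eq_one hG (by rw [nsmul_addRight, card_nsmul_eq_zero, addRight_zero])

theorem sign_mulLeft_eq_pow_choose {F : Type*} [Field F] [Fintype F] [DecidableEq F] (c : Fˣ) :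
    ((sign (Units.mulLeft c) : ℤ) : F) = (c : F) ^ (Fintype.card F).choose 2 := by
  set e := (Fintype.equivFin F).symm
  set τ := e.symm.permCongr (Units.mulLeft c)
  have hτ : ∀ i, e (τ i) = c * e i := fun i => by simp [τ]
  have hV : (Matrix.vandermonde e).det ≠ 0 := Matrix.det_vandermonde_ne_zero_iff.mpr e.injective
  have hpermute :
      (Matrix.vandermonde e).submatrix τ id = Matrix.vandermonde fun i => c * e i := by
    ext i j; simp [Matrix.vandermonde_apply, hτ]
  have hscale : Matrix.vandermonde (fun i => c * e i) =
      Matrix.vandermonde e * Matrix.diagonal fun j : Fin _ => (c : F) ^ (j : ℕ) := by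
    ext i j; simp [Matrix.vandermonde_apply, mul_pow, mul_comm]
  have hsum : ∑ j : Fin (Fintype.card F), (j : ℕ) = (Fintype.card F).choose 2 := by
    rw [Fin.sum_univ_eq_sum_range (fun j => j), sum_range_id, Nat.choose_two_right]
  have key := congrArg Matrix.det (hpermute.trans hscale)
  rw [Matrix.det_permute, Matrix.det_mul, Matrix.det_diagonal, prod_pow_eq_pow_sum, hsum,
    sign_permCongr] at key
  exact mul_right_cancel₀ hV (by rw [key, mul_comm])

theorem sign_mulLeft_unitOfCoprime_eq_legendreSym (p : ℕ) [Fact p.Prime] (hp : p ≠ 2) (a : ℕ)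
    (h : a.Coprime p) :
    (sign (Units.mulLeft (ZMod.unitOfCoprime a h)) : ℤ) = legendreSym p a := by
  have hchoose : p.choose 2 = p * (p / 2) := by
    obtain ⟨k, rfl⟩ := (Fact.out : p.Prime).odd_of_ne_two hp
    rw [Nat.choose_two_right, Nat.add_sub_cancel, mul_left_comm, Nat.mul_div_cancel_left _ two_pos]
    congr 1; omega
  have hcast : ((sign (Units.mulLeft (ZMod.unitOfCoprime a h)) : ℤ) : ZMod p) =
      ((legendreSym p a : ℤ) : ZMod p) := by
    rw [sign_mulLeft_eq_pow_choose, ZMod.card, ZMod.coe_unitOfCoprime, hchoose, pow_mul,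
      ZMod.pow_card, legendreSym.eq_pow, Int.cast_natCast]
  refine Int.cast_injOn_of_ringChar_ne_two (by rwa [ZMod.ringChar_zmod_n]) ?_ ?_ hcast
  · rcases Int.units_eq_one_or (sign (Units.mulLeft (ZMod.unitOfCoprime a h))) with h1 | h1 <;>
      simp [h1]
  · simpa [legendreSym] using quadraticChar_isQuadratic (ZMod p) a

namespace ZMod

theorem natCast_mul_val_natCast (m n k : ℕ) :
    ((m * (k : ZMod n).val : ℕ) : ZMod (m * n)) = ((m * k : ℕ) : ZMod (m * n)) := by
  rw [natCast_eq_natCast_iff, val_natCast]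
  exact (Nat.mod_modEq k n).mul_left' m

theorem bijective_natCast_val_add_mul_val (m n : ℕ) [NeZero m] [NeZero n] :
    Function.Bijective fun x : ZMod m × ZMod n =>
      ((x.1.val + m * x.2.val : ℕ) : ZMod (m * n)) := by
  refine (Fintype.bijective_iff_injective_and_card _).mpr ⟨fun x y hxy => ?_, by simp⟩
  have hlt : ∀ z : ZMod m × ZMod n, z.1.val + m * z.2.val < m * n := fun z => by
    have h1 := z.1.val_lt
    have h2 := z.2.val_lt
    nlinarith
  rw [natCast_eq_natCast_iff', Nat.mod_eq_of_lt (hlt x), Nat.mod_eq_of_lt (hlt y)] at hxy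
  have hm := NeZero.pos m
  have h1 := congrArg (· % m) hxy
  have h2 := congrArg (· / m) hxy
  simp only [Nat.add_mul_mod_self_left, Nat.mod_eq_of_lt (val_lt _),
    Nat.add_mul_div_left _ _ hm, Nat.div_eq_of_lt (val_lt _), zero_add] at h1 h2
  exact Prod.ext (val_injective m h1) (val_injective n h2)

end ZMod

theorem sign_mulLeft_unitOfCoprime_mul {m n : ℕ} [NeZero m] [NeZero n] (hn : Odd n) (a : ℕ)
    (h : a.Coprime (m * n)) :
    sign (Units.mulLeft (ZMod.unitOfCoprime a h)) =
      sign (Units.mulLeft (ZMod.unitOfCoprime a h.coprime_mul_right_right)) ^ n *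
        sign (Units.mulLeft (ZMod.unitOfCoprime a h.coprime_mul_left_right)) ^ m := by
  set q : ZMod m → ZMod n := fun i => ((a * i.val / m : ℕ) : ZMod n)
  set F : Perm (ZMod m × ZMod n) :=
    prodCongrLeft (fun _ => Units.mulLeft (ZMod.unitOfCoprime a h.coprime_mul_right_right)) *
      prodCongrRight fun i =>
        Equiv.addRight (q i) * Units.mulLeft (ZMod.unitOfCoprime a h.coprime_mul_left_right)
  have hF : ∀ x, ((F x).1.val + m * (F x).2.val : ℕ) =
      (a : ZMod (m * n)) * (x.1.val + m * x.2.val : ℕ) := by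
    rintro ⟨i, j⟩
    have h1 : (F (i, j)).1 = ((a * i.val : ℕ) : ZMod m) := by simp [F]
    have h2 : (F (i, j)).2 = ((a * j.val + a * i.val / m : ℕ) : ZMod n) := by simp [F, q]
    rw [h1, h2, ZMod.val_natCast, Nat.cast_add, ZMod.natCast_mul_val_natCast, ← Nat.cast_add,
      ← Nat.cast_mul]
    congr 1
    linear_combination Nat.mod_add_div (a * i.val) m
  rw [← sign_eq_sign_of_equiv F _
    (Equiv.ofBijective _ (ZMod.bijective_natCast_val_add_mul_val m n)) (by simpa using hF)]
  simp [F, sign_prodCongrLeft, sign_prodCongrRight, sign_addRight_of_odd_card, hn]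

theorem sign_mulLeft_unitOfCoprime_eq_jacobiSym (n : ℕ) [NeZero n] (hn : Odd n) (a : ℕ)
    (h : a.Coprime n) :
    (sign (Units.mulLeft (ZMod.unitOfCoprime a h)) : ℤ) = jacobiSym a n := by
  revert ‹NeZero n› hn a
  induction n using Nat.recOnMul with
  | zero => intro _ hn; exact absurd hn Nat.not_odd_zero
  | one => intro _ _ a h; simp [Subsingleton.elim (Units.mulLeft (ZMod.unitOfCoprime a h)) 1]
  | prime p hp =>
    intro _ hn a h
    have := Fact.mk hp
    rw [sign_mulLeft_unitOfCoprime_eq_legendreSym p (by rintro rfl; exact absurd hn (by decide)),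
      jacobiSym.legendreSym.to_jacobiSym]
  | mul m k ihm ihk =>
    intro _ hn a h
    obtain ⟨hm, hk⟩ := Nat.odd_mul.mp hn
    have : NeZero m := ⟨hm.pos.ne'⟩
    have : NeZero k := ⟨hk.pos.ne'⟩
    rw [sign_mulLeft_unitOfCoprime_mul hk, Int.units_pow_eq_self_of_odd _ hk,
      Int.units_pow_eq_self_of_odd _ hm, Units.val_mul, ihm hm, ihk hk, jacobiSym.mul_right]

section modRep

variable {a b : ℕ}

theorem modRep_pos (hb : 0 < b) (x : ℕ) : 0 < modRep a b x := by
  unfold modRep; split_ifs <;> omega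

theorem modRep_le (hb : 0 < b) (x : ℕ) : modRep a b x ≤ b := by
  have := Nat.mod_lt (a * x) hb
  unfold modRep; split_ifs <;> omega

theorem natCast_modRep (x : ℕ) : (modRep a b x : ZMod b) = ((a * x : ℕ) : ZMod b) := by
  unfold modRep
  split_ifs with hz
  · rw [ZMod.natCast_self, ← ZMod.natCast_mod, hz, Nat.cast_zero]
  · rw [ZMod.natCast_mod]

theorem modRep_eq_val_sub_one_add_one [NeZero b] (x : ℕ) :
    modRep a b x = (((a * x : ℕ) : ZMod b) - 1).val + 1 := by
  have hpos := modRep_pos (a := a) (NeZero.pos b) x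
  have hle := modRep_le (a := a) (NeZero.pos b) x
  have hcast : ((modRep a b x - 1 : ℕ) : ZMod b) = ((a * x : ℕ) : ZMod b) - 1 := by
    rw [Nat.cast_sub hpos, natCast_modRep, Nat.cast_one]
  rw [← hcast, ZMod.val_natCast_of_lt (by omega)]
  omega

theorem invNum_eq_card_inversions {σ : Perm (Fin b)}
    (hσ : ∀ i : Fin b, (σ i : ℕ) + 1 = modRep a b (i + 1)) :
    invNum a b = #{p : Fin b × Fin b | p.1 < p.2 ∧ σ p.2 < σ p.1} := by
  have hmem : ∀ i j : Fin b, i < j ∧ σ j < σ i ↔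
      ((i : ℕ) + 1, (j : ℕ) + 1) ∈ (Icc 1 b ×ˢ Icc 1 b).filter
        (fun p => p.1 < p.2 ∧ modRep a b p.2 < modRep a b p.1) := fun i j => by
    have := hσ i
    have := hσ j
    simp only [mem_filter, Fin.lt_def, mem_product, mem_Icc]
    omega
  symm
  refine card_nbij (fun p => ((p.1 : ℕ) + 1, (p.2 : ℕ) + 1))
    (fun p hp => (hmem p.1 p.2).mp (by simpa using hp)) ?_ ?_
  · rintro ⟨i, j⟩ - ⟨i', j'⟩ - h
    simp only [Prod.mk.injEq, add_left_inj] at h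
    exact Prod.ext (Fin.ext h.1) (Fin.ext h.2)
  · rintro ⟨x, y⟩ hxy
    have hbounds := (mem_product.mp (mem_filter.mp hxy).1)
    simp only [mem_Icc] at hbounds
    obtain ⟨i, rfl⟩ : ∃ i : Fin b, (i : ℕ) + 1 = x := ⟨⟨x - 1, by omega⟩, by simp only; omega⟩
    obtain ⟨j, rfl⟩ : ∃ j : Fin b, (j : ℕ) + 1 = y := ⟨⟨y - 1, by omega⟩, by simp only; omega⟩
    exact ⟨(i, j), by simpa using (hmem i j).mpr hxy, rfl⟩

end modRep

/-- Lists `ZMod b` as `1, …, b`, the order in which `invNum` reads the representatives `modRep`. -/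
def finAddOneEquiv (b : ℕ) [NeZero b] : Fin b ≃ ZMod b where
  toFun i := (i : ℕ) + 1
  invFun x := ⟨(x - 1).val, ZMod.val_lt _⟩
  left_inv i := Fin.ext (by simp [ZMod.val_natCast_of_lt i.2])
  right_inv x := by simp

theorem finAddOneEquiv_symm_permCongr_mulLeft_add_one {a b : ℕ} [NeZero b] (h : a.Coprime b)
    (i : Fin b) :
    ((finAddOneEquiv b).symm.permCongr (Units.mulLeft (ZMod.unitOfCoprime a h)) i : ℕ) + 1 =
      modRep a b (i + 1) := by
  rw [modRep_eq_val_sub_one_add_one]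
  simp [finAddOneEquiv]

theorem stmt15_general (a b : ℕ) (hodd : Odd b) (h : Nat.Coprime a b) :
    ((-1 : ℤ)) ^ invNum a b = jacobiSym (a : ℤ) b := by
  have : NeZero b := ⟨hodd.pos.ne'⟩
  rw [← sign_mulLeft_unitOfCoprime_eq_jacobiSym b hodd a h,
    ← sign_permCongr (finAddOneEquiv b).symm, sign_eq_neg_one_pow_card_inversions,
    invNum_eq_card_inversions (finAddOneEquiv_symm_permCongr_mulLeft_add_one h)]
  simp

theorem stmt15 (a b : ℕ) (hb : 3 ≤ b) (hodd : Odd b) (h : Nat.Coprime a b) :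
    ((-1 : ℤ)) ^ invNum a b = jacobiSym (a : ℤ) b :=
  stmt15_general a b hodd h
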